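/- arXiv:1912.12159 — 8 statements merged into one kernel-verified Lean document; each statement's English description precedes it below -/
import Mathlib

section
/- Let R be a (possibly noncommutative) ring and a ∈ R not nilpotent. Then there exists a two-sided ideal I of R which is prime (i.e., for ideals U, V with UV ⊆ I, either U ⊆ I or V ⊆ I) such that a + I is a minimal non-nilpotent element of R/I. -/
/-!
Take an ideal `I` maximal among those containing no power of `a` (Zorn, starting from `0`,
which works since `a` is not nilpotent). Every ideal strictly above `I` then contains a power
of `a`, and `I` is prime: if `U, V ⊄ I`, then `I + U ∋ a ^ m` and `I + V ∋ a ^ k`, while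
`UV ⊆ I` would force `a ^ (m + k) ∈ (I + U)(I + V) ⊆ I`.
-/

/-- A two-sided ideal `I` of a ring is *prime* if `I ≠ R` and for all two-sided
ideals `U`, `V`, `UV ⊆ I` implies `U ⊆ I` or `V ⊆ I`. -/
def TwoSidedIdeal.IsPrimeIdeal {R : Type*} [Ring R] (I : TwoSidedIdeal R) : Prop :=
  I ≠ ⊤ ∧ ∀ U V : TwoSidedIdeal R,
    (∀ u ∈ U, ∀ v ∈ V, u * v ∈ I) → U ≤ I ∨ V ≤ I

namespace TwoSidedIdeal

section NonUnitalNonAssocRing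

variable {R : Type*} [NonUnitalNonAssocRing R]

lemma mem_sSup_of_directedOn {c : Set (TwoSidedIdeal R)} (hne : c.Nonempty)
    (hc : DirectedOn (· ≤ ·) c) {x : R} : x ∈ sSup c ↔ ∃ J ∈ c, x ∈ J := by
  refine ⟨fun hx => ?_, fun ⟨J, hJ, hx⟩ => le_sSup hJ hx⟩
  let union : TwoSidedIdeal R := mk' {x | ∃ J ∈ c, x ∈ J}
    (hne.elim fun J hJ => ⟨J, hJ, J.zero_mem⟩)
    (fun ⟨J₁, hJ₁, hx⟩ ⟨J₂, hJ₂, hy⟩ =>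
      let ⟨J, hJ, h₁, h₂⟩ := hc J₁ hJ₁ J₂ hJ₂
      ⟨J, hJ, J.add_mem (h₁ hx) (h₂ hy)⟩)
    (fun ⟨J, hJ, hx⟩ => ⟨J, hJ, J.neg_mem hx⟩)
    (fun ⟨J, hJ, hy⟩ => ⟨J, hJ, J.mul_mem_left _ _ hy⟩)
    (fun ⟨J, hJ, hx⟩ => ⟨J, hJ, J.mul_mem_right _ _ hx⟩)
  have hle : sSup c ≤ union := sSup_le fun J hJ y hy => (mem_mk' _ _ _ _ _ _ y).2 ⟨J, hJ, hy⟩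
  exact (mem_mk' _ _ _ _ _ _ x).1 (hle hx)

lemma exists_le_maximal_disjoint {s : Set R} {I : TwoSidedIdeal R}
    (hI : Disjoint (I : Set R) s) :
    ∃ J, I ≤ J ∧ Maximal (fun J : TwoSidedIdeal R => Disjoint (J : Set R) s) J := by
  refine zorn_le_nonempty₀ _ (fun c hcs hc J hJ => ⟨sSup c, ?_, fun _ => le_sSup⟩) I hI
  refine Set.disjoint_left.2 fun x hx hxs => ?_
  obtain ⟨K, hK, hxK⟩ := (mem_sSup_of_directedOn ⟨J, hJ⟩ hc.directedOn).1 hx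
  exact Set.disjoint_left.1 (hcs hK) hxK hxs

lemma mul_mem_of_mem_sup {I U V : TwoSidedIdeal R} (hUV : ∀ u ∈ U, ∀ v ∈ V, u * v ∈ I)
    {x y : R} (hx : x ∈ I ⊔ U) (hy : y ∈ I ⊔ V) : x * y ∈ I := by
  obtain ⟨i, hi, u, hu, rfl⟩ := mem_sup.1 hx
  obtain ⟨j, hj, v, hv, rfl⟩ := mem_sup.1 hy
  rw [add_mul, mul_add u, ← add_assoc]
  exact I.add_mem (I.add_mem (I.mul_mem_right _ _ hi) (I.mul_mem_left _ _ hj)) (hUV u hu v hv)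

end NonUnitalNonAssocRing

lemma isPrimeIdeal_of_maximal_disjoint {R : Type*} [Ring R] {M : Submonoid R}
    {I : TwoSidedIdeal R} (hI : Maximal (fun J : TwoSidedIdeal R => Disjoint (J : Set R) M) I) :
    I.IsPrimeIdeal := by
  have meets_of_not_le {U : TwoSidedIdeal R} (hU : ¬U ≤ I) : ∃ m ∈ M, m ∈ I ⊔ U := by
    have hlt : I < I ⊔ U := left_lt_sup.2 hU
    obtain ⟨m, hmI, hmM⟩ := Set.not_disjoint_iff.1 (hI.not_prop_of_gt hlt)
    exact ⟨m, hmM, hmI⟩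
  refine ⟨fun htop => Set.disjoint_left.1 hI.prop (htop ▸ mem_top R) M.one_mem, ?_⟩
  intro U V hUV
  by_contra! ⟨hU, hV⟩
  obtain ⟨m, hmM, hm⟩ := meets_of_not_le hU
  obtain ⟨k, hkM, hk⟩ := meets_of_not_le hV
  exact Set.disjoint_left.1 hI.prop (mul_mem_of_mem_sup hUV hm hk) (M.mul_mem hmM hkM)

end TwoSidedIdeal

/-- For every non-nilpotent element `a` of a ring `R` there is a prime two-sided
ideal `I` such that `a + I` is a minimal non-nilpotent element of `R/I`:
no power of `a` lies in `I` (so `a + I` is not nilpotent), but for every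
two-sided ideal `J` properly containing `I` (i.e. every nonzero ideal of `R/I`)
some power of `a` lies in `J`. -/
theorem exists_prime_minimal_non_nilpotent {R : Type*} [Ring R] (a : R)
    (ha : ¬ IsNilpotent a) :
    ∃ I : TwoSidedIdeal R, I.IsPrimeIdeal ∧
      (∀ n : ℕ, a ^ n ∉ I) ∧
      (∀ J : TwoSidedIdeal R, I < J → ∃ n : ℕ, a ^ n ∈ J) := by
  have hbot : Disjoint ((⊥ : TwoSidedIdeal R) : Set R) (Submonoid.powers a) := by
    refine Set.disjoint_left.2 fun x hx ⟨n, hn⟩ => ha ⟨n, ?_⟩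
    subst hn
    exact (TwoSidedIdeal.mem_bot R).1 hx
  obtain ⟨I, -, hI⟩ := TwoSidedIdeal.exists_le_maximal_disjoint hbot
  refine ⟨I, TwoSidedIdeal.isPrimeIdeal_of_maximal_disjoint hI,
    fun n hn => Set.disjoint_left.1 hI.prop hn ⟨n, rfl⟩, fun J hIJ => ?_⟩
  obtain ⟨x, hxJ, n, rfl⟩ := Set.not_disjoint_iff.1 (hI.not_prop_of_gt hIJ)
  exact ⟨n, hxJ⟩
end

section
/- Let F be a field and R an F-algebra generated (as an F-algebra) by two principally nilpotent elements x, y. Then R is a local ring whose Jacobson radical equals xR + yR, and also equals Rx + Ry. -/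
/-!
A principally nilpotent `a` lies in the Jacobson radical `J`: for every `r`, `r * a` is nilpotent
along with `a * r`, so `1 + r * a` is a unit. Hence `xR + yR` and `Rx + Ry` lie in `J`. Every
monomial of positive degree in `x, y` begins with `x` or `y` and ends with `x` or `y`, so
`R = F + (xR + yR) = F + (Rx + Ry)`. As `J` is proper it contains no nonzero scalar, which forces
`J = xR + yR = Rx + Ry`; and `R = F + J` with `1 + J` consisting of units makes `R` local.
-/

/-- An element `a` of a ring is *principally nilpotent* if every element of the
right ideal `aR` is nilpotent. -/
def PrincipallyNilpotent {R : Type*} [Ring R] (a : R) : Prop :=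
  ∀ r : R, IsNilpotent (a * r)

theorem isNilpotent_mul_comm {R : Type*} [MonoidWithZero R] {a b : R} :
    IsNilpotent (a * b) ↔ IsNilpotent (b * a) := by
  have swap : ∀ a b : R, IsNilpotent (a * b) → IsNilpotent (b * a) := by
    rintro a b ⟨n, hn⟩
    exact ⟨n + 1, by rw [pow_succ', mul_assoc, ← mul_pow_mul, hn, zero_mul, mul_zero]⟩
  exact ⟨swap a b, swap b a⟩

namespace Ideal

variable {R : Type*} [Ring R]

theorem isUnit_one_add_of_mem_jacobson_bot {j : R} (hj : j ∈ jacobson (⊥ : Ideal R)) :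
    IsUnit (1 + j) := by
  have left_inv : ∀ j ∈ jacobson (⊥ : Ideal R), ∃ z, z * (1 + j) = 1 := fun j hj ↦ by
    obtain ⟨z, hz⟩ := mem_jacobson_iff.mp hj 1
    exact ⟨z, by rw [mem_bot, mul_one, sub_eq_zero] at hz; rw [mul_one_add, add_comm, hz]⟩
  obtain ⟨z, hz⟩ := left_inv j hj
  -- `z = 1 - z * j` lies in `1 + J` as well, so it has a left inverse `w`, which must be `1 + j`.
  obtain ⟨w, hw⟩ := left_inv (-(z * j)) (neg_mem (mul_mem_left _ z hj))
  have hz' : 1 + -(z * j) = z := by rw [← hz]; noncomm_ring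
  rw [hz'] at hw
  have hw' : w = 1 + j := calc
    w = w * (z * (1 + j)) := by rw [hz, mul_one]
    _ = 1 + j := by rw [← mul_assoc, hw, one_mul]
  exact isUnit_iff_exists.mpr ⟨z, by rw [← hw', hw], hz⟩

theorem one_not_mem_jacobson_bot [Nontrivial R] : (1 : R) ∉ jacobson (⊥ : Ideal R) := fun h ↦
  bot_ne_top (jacobson_eq_top_iff.mp ((eq_top_iff_one _).mpr h))

end Ideal

namespace PrincipallyNilpotent

variable {R : Type*} [Ring R] {a : R}

theorem mul_right (ha : PrincipallyNilpotent a) (r : R) : PrincipallyNilpotent (a * r) :=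
  fun s ↦ by simpa only [mul_assoc] using ha (r * s)

theorem mem_jacobson_bot (ha : PrincipallyNilpotent a) : a ∈ Ideal.jacobson (⊥ : Ideal R) := by
  refine Ideal.mem_jacobson_iff.mpr fun r ↦ ?_
  obtain ⟨u, hu⟩ := (isNilpotent_mul_comm.mp (ha r)).isUnit_add_one
  refine ⟨↑u⁻¹, ?_⟩
  rw [Ideal.mem_bot, mul_assoc, ← mul_add_one, ← hu, u.inv_mul, sub_self]

end PrincipallyNilpotent

section Algebra

variable {F R : Type*} [Field F] [Ring R] [Nontrivial R] [Algebra F R]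

theorem eq_zero_of_algebraMap_mem_jacobson_bot {c : F}
    (hc : algebraMap F R c ∈ Ideal.jacobson (⊥ : Ideal R)) : c = 0 := by
  by_contra hc0
  exact Ideal.one_not_mem_jacobson_bot
    (Ideal.eq_top_of_isUnit_mem _ hc ((isUnit_iff_ne_zero.mpr hc0).map _) ▸ Submodule.mem_top)

theorem Ideal.coe_jacobson_bot_eq_of_forall_eq_algebraMap_add {S : Set R}
    (hS : S ⊆ Ideal.jacobson (⊥ : Ideal R))
    (h : ∀ r, ∃ c : F, ∃ s ∈ S, r = algebraMap F R c + s) :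
    (Ideal.jacobson (⊥ : Ideal R) : Set R) = S := by
  refine Set.Subset.antisymm (fun r hr ↦ ?_) hS
  obtain ⟨c, s, hs, rfl⟩ := h r
  have hc : algebraMap F R c ∈ Ideal.jacobson (⊥ : Ideal R) := by
    simpa using sub_mem hr (hS hs)
  rwa [eq_zero_of_algebraMap_mem_jacobson_bot hc, map_zero, zero_add]

theorem IsLocalRing.of_forall_eq_algebraMap_add_mem_jacobson_bot
    (h : ∀ r, ∃ c : F, ∃ j ∈ Ideal.jacobson (⊥ : Ideal R), r = algebraMap F R c + j) :
    IsLocalRing R := by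
  refine IsLocalRing.of_isUnit_or_isUnit_one_sub_self fun r ↦ ?_
  obtain ⟨c, j, hj, rfl⟩ := h r
  rcases eq_or_ne c 0 with rfl | hc
  · right
    simpa [sub_eq_add_neg] using Ideal.isUnit_one_add_of_mem_jacobson_bot (neg_mem hj)
  · left
    have hfac : algebraMap F R c + j = algebraMap F R c * (1 + algebraMap F R c⁻¹ * j) := by
      rw [mul_one_add, ← mul_assoc, ← map_mul, mul_inv_cancel₀ hc, map_one, one_mul]
    rw [hfac]
    exact ((isUnit_iff_ne_zero.mpr hc).map _).mul
      (Ideal.isUnit_one_add_of_mem_jacobson_bot (Ideal.mul_mem_left _ _ hj))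

end Algebra

theorem exists_eq_algebraMap_add_mul_add_mul {F R : Type*} [CommSemiring F] [Semiring R]
    [Algebra F R] {x y : R} (hgen : Algebra.adjoin F ({x, y} : Set R) = ⊤) (r : R) :
    ∃ (c : F) (s t : R), r = algebraMap F R c + x * s + y * t := by
  have hr : r ∈ Algebra.adjoin F ({x, y} : Set R) := hgen ▸ Algebra.mem_top
  induction hr using Algebra.adjoin_induction with
  | mem z hz =>
    rcases hz with rfl | rfl
    · exact ⟨0, 1, 0, by simp⟩
    · exact ⟨0, 0, 1, by simp⟩
  | algebraMap c => exact ⟨c, 0, 0, by simp⟩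
  | add a b _ _ ha hb =>
    obtain ⟨c₁, s₁, t₁, rfl⟩ := ha
    obtain ⟨c₂, s₂, t₂, rfl⟩ := hb
    exact ⟨c₁ + c₂, s₁ + s₂, t₁ + t₂, by simp only [map_add, mul_add]; abel⟩
  | mul a b _ _ ha hb =>
    obtain ⟨c₁, s₁, t₁, rfl⟩ := ha
    obtain ⟨c₂, s₂, t₂, hb⟩ := hb
    refine ⟨c₁ * c₂, c₁ • s₂ + s₁ * b, c₁ • t₂ + t₁ * b, ?_⟩
    rw [add_mul, add_mul, ← Algebra.smul_def]
    nth_rewrite 1 [hb]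
    rw [smul_add, smul_add, ← mul_smul_comm, ← mul_smul_comm, Algebra.smul_def, ← map_mul,
      mul_add, mul_add, mul_assoc, mul_assoc]
    abel

theorem exists_eq_algebraMap_add_mul_add_mul' {F R : Type*} [CommSemiring F] [Semiring R]
    [Algebra F R] {x y : R} (hgen : Algebra.adjoin F ({x, y} : Set R) = ⊤) (r : R) :
    ∃ (c : F) (s t : R), r = algebraMap F R c + s * x + t * y := by
  have hgen_op : Algebra.adjoin F ({.op x, .op y} : Set Rᵐᵒᵖ) = ⊤ := by
    have := congrArg Subalgebra.op hgen
    rw [Subalgebra.op_adjoin, Subalgebra.op_top] at this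
    convert this using 2
    ext z; simp [← MulOpposite.unop_inj]
  obtain ⟨c, s, t, h⟩ := exists_eq_algebraMap_add_mul_add_mul hgen_op (.op r)
  exact ⟨c, s.unop, t.unop, by simpa using congrArg MulOpposite.unop h⟩

/-- An algebra over a field generated by two principally nilpotent elements is a
local ring whose Jacobson radical equals `xR + yR` and equals `Rx + Ry`. -/
theorem local_of_generated_by_principally_nilpotent {F R : Type*} [Field F]
    [Ring R] [Nontrivial R] [Algebra F R] (x y : R)
    (hx : PrincipallyNilpotent x) (hy : PrincipallyNilpotent y)
    (hgen : Algebra.adjoin F ({x, y} : Set R) = ⊤) :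
    IsLocalRing R ∧
      (∀ r : R, r ∈ Ideal.jacobson (⊥ : Ideal R) ↔ ∃ s t : R, r = x * s + y * t) ∧
      (∀ r : R, r ∈ Ideal.jacobson (⊥ : Ideal R) ↔ ∃ s t : R, r = s * x + t * y) := by
  have hright : {r : R | ∃ s t, r = x * s + y * t} ⊆ (Ideal.jacobson (⊥ : Ideal R) : Set R) := by
    rintro _ ⟨s, t, rfl⟩
    exact add_mem (hx.mul_right s).mem_jacobson_bot (hy.mul_right t).mem_jacobson_bot
  have hleft : {r : R | ∃ s t, r = s * x + t * y} ⊆ (Ideal.jacobson (⊥ : Ideal R) : Set R) := by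
    rintro _ ⟨s, t, rfl⟩
    exact add_mem (Ideal.mul_mem_left _ s hx.mem_jacobson_bot)
      (Ideal.mul_mem_left _ t hy.mem_jacobson_bot)
  have hdecomp (r : R) : ∃ c : F, ∃ j ∈ {r : R | ∃ s t, r = x * s + y * t},
      r = algebraMap F R c + j := by
    obtain ⟨c, s, t, rfl⟩ := exists_eq_algebraMap_add_mul_add_mul hgen r
    exact ⟨c, _, ⟨s, t, rfl⟩, add_assoc _ _ _⟩
  have hdecomp' (r : R) : ∃ c : F, ∃ j ∈ {r : R | ∃ s t, r = s * x + t * y},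
      r = algebraMap F R c + j := by
    obtain ⟨c, s, t, rfl⟩ := exists_eq_algebraMap_add_mul_add_mul' hgen r
    exact ⟨c, _, ⟨s, t, rfl⟩, add_assoc _ _ _⟩
  refine ⟨IsLocalRing.of_forall_eq_algebraMap_add_mem_jacobson_bot (F := F) fun r ↦ ?_,
    fun r ↦ ?_, fun r ↦ ?_⟩
  · obtain ⟨c, j, hj, hr⟩ := hdecomp r
    exact ⟨c, j, hright hj, hr⟩
  · exact Set.ext_iff.mp (Ideal.coe_jacobson_bot_eq_of_forall_eq_algebraMap_add hright hdecomp) r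
  · exact Set.ext_iff.mp (Ideal.coe_jacobson_bot_eq_of_forall_eq_algebraMap_add hleft hdecomp') r
end

section
/- Let R be a ring satisfying condition (NK), i.e., there exist nil right ideals K, L of R with K + L not nil. Then there exist elements x ∈ K and y ∈ L such that x + y is not nilpotent, and in the subring S of R generated by x and y, both xS and yS are nil right ideals of S while x + y is not nilpotent in S. -/
/-- A right ideal (an `Rᵐᵒᵖ`-submodule of `R`) is *nil* if all its elements are
nilpotent. -/
def IsNilRightIdeal {R : Type*} [Ring R] (I : Submodule Rᵐᵒᵖ R) : Prop :=
  ∀ x ∈ I, IsNilpotent x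

/-! Any decomposition `x + y` of a non-nilpotent element of `K + L` works: `x * s` lies in the
right ideal `K` for every `s ∈ R`, not only for `s` in the subring generated by `x` and `y`, and
nilpotency in that subring is nilpotency in `R`. -/

namespace IsNilRightIdeal

variable {R : Type*} [Ring R] {I J : Submodule Rᵐᵒᵖ R}

theorem isNilpotent_mul (hI : IsNilRightIdeal I) {x : R} (hx : x ∈ I) (s : R) :
    IsNilpotent (x * s) :=
  hI _ (I.smul_mem (MulOpposite.op s) hx)

theorem exists_add_not_isNilpotent_of_not_sup (hIJ : ¬ IsNilRightIdeal (I ⊔ J)) :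
    ∃ x ∈ I, ∃ y ∈ J, ¬ IsNilpotent (x + y) := by
  obtain ⟨z, hz, hnz⟩ : ∃ z ∈ I ⊔ J, ¬ IsNilpotent z := by
    simpa [IsNilRightIdeal] using hIJ
  obtain ⟨x, hx, y, hy, rfl⟩ := Submodule.mem_sup.mp hz
  exact ⟨x, hx, y, hy, hnz⟩

end IsNilRightIdeal

/-- If `K`, `L` are nil right ideals of `R` with `K + L` not nil, then there are
`x ∈ K`, `y ∈ L` with `x + y` not nilpotent such that in the subring `S`
generated by `x` and `y`, the right ideals `xS` and `yS` are nil, while `x + y`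
is not nilpotent. -/
theorem exists_two_generated_subring_NK {R : Type*} [Ring R]
    (K L : Submodule Rᵐᵒᵖ R) (hK : IsNilRightIdeal K) (hL : IsNilRightIdeal L)
    (hKL : ¬ IsNilRightIdeal (K ⊔ L)) :
    ∃ x ∈ K, ∃ y ∈ L, ¬ IsNilpotent (x + y) ∧
      (∀ s ∈ Subring.closure ({x, y} : Set R),
        IsNilpotent (x * s) ∧ IsNilpotent (y * s)) := by
  obtain ⟨x, hx, y, hy, hxy⟩ := IsNilRightIdeal.exists_add_not_isNilpotent_of_not_sup hKL
  exact ⟨x, hx, y, hy, hxy, fun s _ => ⟨hK.isNilpotent_mul hx s, hL.isNilpotent_mul hy s⟩⟩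
end

section
/- Let R be a ring satisfying (NK) and suppose the subgroup of (R,+) generated by 1 is isomorphic to ℤ (i.e., R has characteristic 0 in the strong sense that n·1 ≠ 0 for all n ≥ 1). If moreover R is torsion-free as an abelian group, then there exists a ℚ-algebra A satisfying (NK) generated by two principally nilpotent elements. -/
/-- A ring satisfies condition (NK) if it contains two nil right ideals whose
sum is not nil. -/
def SatisfiesNK (R : Type*) [Ring R] : Prop :=
  ∃ K L : Submodule Rᵐᵒᵖ R,
    IsNilRightIdeal K ∧ IsNilRightIdeal L ∧ ¬ IsNilRightIdeal (K ⊔ L)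

/-- Auxiliary predicate: `A` is a `ℚ`-algebra satisfying (NK) generated by two
principally nilpotent elements. -/
def IsTwoGeneratedNKQAlgebra (A : Type) [Ring A] [Algebra ℚ A] : Prop :=
  ∃ x y : A, PrincipallyNilpotent x ∧ PrincipallyNilpotent y ∧
    Algebra.adjoin ℚ ({x, y} : Set A) = ⊤ ∧ SatisfiesNK A

/-!
Pick `a ∈ K`, `b ∈ L` with `a + b` not nilpotent; `a` and `b` are principally nilpotent. They
generate a subring `S` of `R` which is small, hence may be taken in `Type`, and is torsion-free,
so `S ↪ ℚ ⊗[ℤ] S`. Every element of `ℚ ⊗[ℤ] S` becomes `1 ⊗ s` after multiplication by a nonzero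
integer, so `1 ⊗ a` and `1 ⊗ b` stay principally nilpotent, while `1 ⊗ (a + b)` is not nilpotent
by injectivity. The principal right ideals they generate witness (NK) in the `ℚ`-algebra
`ℚ ⊗[ℤ] S`, which `1 ⊗ a` and `1 ⊗ b` generate.
-/

open scoped TensorProduct

section NK

variable {R : Type*} [Ring R]

theorem PrincipallyNilpotent.of_mem {I : Submodule Rᵐᵒᵖ R} (hI : IsNilRightIdeal I) {a : R}
    (ha : a ∈ I) : PrincipallyNilpotent a := fun r ↦
  hI _ (by simpa using I.smul_mem (MulOpposite.op r) ha)

theorem PrincipallyNilpotent.isNilRightIdeal_span {a : R} (ha : PrincipallyNilpotent a) :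
    IsNilRightIdeal (Submodule.span Rᵐᵒᵖ {a}) := by
  intro x hx
  obtain ⟨r, rfl⟩ := Submodule.mem_span_singleton.mp hx
  simpa [MulOpposite.smul_eq_mul_unop] using ha r.unop

theorem PrincipallyNilpotent.of_injective {S : Type*} [Ring S] {f : S →+* R}
    (hf : Function.Injective f) {s : S} (h : PrincipallyNilpotent (f s)) :
    PrincipallyNilpotent s := fun r ↦
  (IsNilpotent.map_iff hf).mp (by simpa using h (f r))

theorem satisfiesNK_iff_exists_principallyNilpotent :
    SatisfiesNK R ↔ ∃ a b : R, PrincipallyNilpotent a ∧ PrincipallyNilpotent b ∧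
      ¬ IsNilpotent (a + b) := by
  constructor
  · rintro ⟨K, L, hK, hL, hKL⟩
    obtain ⟨x, hx, hnil⟩ : ∃ x ∈ K ⊔ L, ¬ IsNilpotent x := by
      simpa [IsNilRightIdeal] using hKL
    obtain ⟨a, ha, b, hb, rfl⟩ := Submodule.mem_sup.mp hx
    exact ⟨a, b, .of_mem hK ha, .of_mem hL hb, hnil⟩
  · rintro ⟨a, b, ha, hb, hab⟩
    refine ⟨_, _, ha.isNilRightIdeal_span, hb.isNilRightIdeal_span, fun h ↦ hab (h _ ?_)⟩
    exact Submodule.add_mem_sup (Submodule.mem_span_singleton_self a)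
      (Submodule.mem_span_singleton_self b)

end NK

universe v

theorem small_subringClosure {R : Type*} [Ring R] (s : Set R) [Small.{v} s] :
    Small.{v} (Subring.closure s) := by
  let f : Shrink.{v} s → R := Subtype.val ∘ (equivShrink s).symm
  have hf : Set.range f = s := by
    rw [Set.range_comp, Equiv.range_eq_univ, Set.image_univ, Subtype.range_coe]
  have : (Subring.closure s : Set R) = Set.range (FreeAlgebra.lift ℤ f) := by
    rw [← AlgHom.coe_range, ← Algebra.adjoin_range_eq_range_freeAlgebra_lift, hf,
      Algebra.adjoin_int]
    rfl
  rw [← SetLike.coe_sort_coe, this]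
  exact small_range _

theorem exists_small_model_of_pair {R : Type*} [Ring R] (a b : R) :
    ∃ (S : Type v) (_ : Ring S) (ι : S →+* R) (x y : S), Function.Injective ι ∧ ι x = a ∧
      ι y = b ∧ Subring.closure {x, y} = ⊤ := by
  let T := Subring.closure ({a, b} : Set R)
  have : Small.{v} T := small_subringClosure _
  let e : Shrink.{v} T ≃+* T := Shrink.ringEquiv T
  let ι : Shrink.{v} T →+* R := T.subtype.comp e.toRingHom
  have hι : Function.Injective ι := Subtype.val_injective.comp e.injective
  let x := e.symm ⟨a, Subring.subset_closure (by simp)⟩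
  let y := e.symm ⟨b, Subring.subset_closure (by simp)⟩
  have hx : ι x = a := by simp [ι, x]
  have hy : ι y = b := by simp [ι, y]
  refine ⟨_, inferInstance, ι, x, y, hι, hx, hy, eq_top_iff.mpr fun s _ ↦ ?_⟩
  have hs : ι s ∈ (Subring.closure {x, y}).map ι := by
    rw [RingHom.map_closure, Set.image_pair, hx, hy]
    exact (e s).2
  obtain ⟨t, ht, hts⟩ := hs
  rwa [← hι hts]

section RatBaseChange

variable {S : Type*} [Ring S]

theorem exists_zsmul_eq_one_tmul (t : ℚ ⊗[ℤ] S) :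
    ∃ c : ℤ, c ≠ 0 ∧ ∃ s : S, c • t = (1 : ℚ) ⊗ₜ s := by
  obtain ⟨⟨s, c⟩, h⟩ := IsLocalizedModule.surj (nonZeroDivisors ℤ) (TensorProduct.mk ℤ ℚ S 1) t
  exact ⟨c, nonZeroDivisors.ne_zero c.2, s, h⟩

theorem one_tmul_injective [IsAddTorsionFree S] :
    Function.Injective fun s : S ↦ (1 : ℚ) ⊗ₜ[ℤ] s := by
  change Function.Injective (TensorProduct.mk ℤ ℚ S 1)
  rw [IsLocalizedModule.injective_iff_isRegular (nonZeroDivisors ℤ)]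
  exact fun c ↦ zsmul_right_injective (nonZeroDivisors.ne_zero c.2)

theorem PrincipallyNilpotent.one_tmul {s : S} (h : PrincipallyNilpotent s) :
    PrincipallyNilpotent ((1 : ℚ) ⊗ₜ[ℤ] s) := by
  intro t
  obtain ⟨c, hc, u, hu⟩ := exists_zsmul_eq_one_tmul t
  obtain ⟨m, hm⟩ := h u
  -- `c • t = 1 ⊗ u` clears denominators; multiplication by `c ^ m` is injective on a `ℚ`-module.
  have : IsAddTorsionFree (ℚ ⊗[ℤ] S) := .of_isTorsionFree ℚ _
  refine ⟨m, (zsmul_right_injective (pow_ne_zero m hc)).eq_iff.mp ?_⟩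
  rw [← smul_pow, ← mul_smul_comm, hu, Algebra.TensorProduct.tmul_mul_tmul, one_mul,
    Algebra.TensorProduct.tmul_pow, one_pow, hm, TensorProduct.tmul_zero, smul_zero]

theorem isTwoGeneratedNKQAlgebra_rat_tensorProduct {S : Type} [Ring S] [IsAddTorsionFree S]
    {x y : S} (hx : PrincipallyNilpotent x) (hy : PrincipallyNilpotent y)
    (hxy : ¬ IsNilpotent (x + y)) (hgen : Subring.closure {x, y} = ⊤) :
    IsTwoGeneratedNKQAlgebra (ℚ ⊗[ℤ] S) := by
  refine ⟨_, _, hx.one_tmul, hy.one_tmul, ?_, satisfiesNK_iff_exists_principallyNilpotent.mpr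
    ⟨_, _, hx.one_tmul, hy.one_tmul, ?_⟩⟩
  · have := Algebra.TensorProduct.adjoin_one_tmul_image_eq_top (A := ℚ) ({x, y} : Set S)
      (by rw [Algebra.adjoin_int, hgen]; rfl)
    rwa [Set.image_pair] at this
  · rw [← TensorProduct.tmul_add]
    exact mt (IsNilpotent.map_iff (f := Algebra.TensorProduct.includeRight)
      one_tmul_injective).mp hxy

end RatBaseChange

theorem exists_Q_algebra_NK_general {R : Type*} [Ring R] (hNK : SatisfiesNK R)
    (htf : ∀ (n : ℕ) (r : R), 1 ≤ n → n • r = 0 → r = 0) :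
    ∃ (A : Type) (iA : Ring A) (jA : @Algebra ℚ A _ iA.toSemiring),
      @IsTwoGeneratedNKQAlgebra A iA jA := by
  obtain ⟨a, b, ha, hb, hab⟩ := satisfiesNK_iff_exists_principallyNilpotent.mp hNK
  obtain ⟨S, _, ι, x, y, hι, rfl, rfl, hgen⟩ := exists_small_model_of_pair.{0} a b
  have : IsAddTorsionFree R := ⟨fun n hn r s hrs ↦ sub_eq_zero.mp <|
    htf n _ (Nat.one_le_iff_ne_zero.mpr hn) (by simpa [smul_sub, sub_eq_zero] using hrs)⟩
  have : IsAddTorsionFree S := hι.isAddTorsionFree ι.toAddMonoidHom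
  refine ⟨ℚ ⊗[ℤ] S, inferInstance, inferInstance, isTwoGeneratedNKQAlgebra_rat_tensorProduct
    (ha.of_injective hι) (hb.of_injective hι) ?_ hgen⟩
  rwa [← IsNilpotent.map_iff hι, map_add]

/-- If a ring satisfying (NK) has `n·1 ≠ 0` for all `n ≥ 1` and is torsion-free
as an abelian group, then there exists a `ℚ`-algebra satisfying (NK) generated
by two principally nilpotent elements. -/
theorem exists_Q_algebra_NK {R : Type*} [Ring R] (hNK : SatisfiesNK R)
    (hchar : ∀ n : ℕ, 1 ≤ n → (n : R) ≠ 0)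
    (htf : ∀ (n : ℕ) (r : R), 1 ≤ n → n • r = 0 → r = 0) :
    ∃ (A : Type) (iA : Ring A) (jA : @Algebra ℚ A _ iA.toSemiring),
      @IsTwoGeneratedNKQAlgebra A iA jA :=
  exists_Q_algebra_NK_general hNK htf
end

section
/- Let Q be a ring satisfying the ascending chain condition on right annihilators and on left annihilators, and let R be a subring of Q. Then every nil right ideal of R is nilpotent. -/
/-!
Let `N ⊆ Q` be the image of the nil right ideal; it is closed under multiplication. The right
annihilators `r(N^k)` increase with `k`, hence are constant from some `k` on; then `A = N^k` is
multiplicatively closed, nil, and `r(A³) = r(A)`, and it suffices to show `A² = 0`.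

If `A² ≠ 0`, choose among the sets `W` with `AW ≠ 0` one whose left annihilator `l(AW)` is maximal,
then `τ ∈ A` with `AτAW ≠ 0` and `l(τAW)` maximal (such `τ` exist because `r(A³) = r(A)`). For
`z ∈ A`, if `AτzτAW ≠ 0`, maximality gives `l(τz · τAW) = l(τAW)`, and descending through the powers
of the nilpotent `τz` shows `τAW = 0`, which is absurd. Hence `Aτ` annihilates `AτAW` but not `AW`,
so `l(AW) ⊊ l(AτAW)`, contradicting the choice of `W`.
-/

open scoped Pointwise

namespace HersteinSmall

section Annihilator

variable {M : Type*} [Mul M] [Zero M]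

def leftAnnihilator (S : Set M) : Set M := {x | ∀ s ∈ S, x * s = 0}

def rightAnnihilator (S : Set M) : Set M := {x | ∀ s ∈ S, s * x = 0}

theorem leftAnnihilator_antitone : Antitone (leftAnnihilator (M := M)) :=
  fun _ _ hST _ hx s hs => hx s (hST hs)

theorem rightAnnihilator_antitone : Antitone (rightAnnihilator (M := M)) :=
  fun _ _ hST _ hx s hs => hx s (hST hs)

variable (M) in
def HasACCLeftAnnihilators : Prop :=
  ∀ c : ℕ → Set M, (∀ n, ∃ S, c n = leftAnnihilator S) → Monotone c →
    ∃ n, ∀ m, n ≤ m → c m = c n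

variable (M) in
def HasACCRightAnnihilators : Prop :=
  ∀ c : ℕ → Set M, (∀ n, ∃ S, c n = rightAnnihilator S) → Monotone c →
    ∃ n, ∀ m, n ≤ m → c m = c n

theorem HasACCLeftAnnihilators.exists_maximal (hL : HasACCLeftAnnihilators M) {ι : Type*}
    [Nonempty ι] (S : ι → Set M) :
    ∃ i, ∀ j, leftAnnihilator (S i) ⊆ leftAnnihilator (S j) →
      leftAnnihilator (S j) = leftAnnihilator (S i) := by
  let α := {T : Set M // ∃ S, T = leftAnnihilator S}
  have : WellFoundedGT α := wellFoundedGT_iff_monotone_chain_condition.2 fun c => by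
    obtain ⟨n, hn⟩ := hL (fun n => (c n).1) (fun n => (c n).2) fun _ _ h => c.monotone h
    exact ⟨n, fun m hm => Subtype.ext (hn m hm).symm⟩
  obtain ⟨_, ⟨i, rfl⟩, hmax⟩ := wellFounded_gt.has_min
    (Set.range fun i => (⟨leftAnnihilator (S i), S i, rfl⟩ : α)) (Set.range_nonempty _)
  refine ⟨i, fun j hij => ?_⟩
  by_contra hne
  exact hmax _ ⟨j, rfl⟩ (lt_of_le_of_ne hij fun h => hne (congrArg Subtype.val h).symm)

end Annihilator

theorem pow_succ_subset_pow_succ_of_mul_subset {M : Type*} [Monoid M] {N : Set M}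
    (hN : N * N ⊆ N) {m n : ℕ} (hmn : m ≤ n) : N ^ (n + 1) ⊆ N ^ (m + 1) := by
  induction n, hmn using Nat.le_induction with
  | base => rfl
  | succ n _ ih =>
    refine subset_trans ?_ ih
    rw [pow_succ _ (n + 1), pow_succ, mul_assoc]
    exact Set.mul_subset_mul_left hN

section MonoidWithZero

variable {M : Type*} [MonoidWithZero M]

theorem subset_zero_of_leftAnnihilator_smul_subset {x : M} (hx : IsNilpotent x) {T : Set M}
    (h : leftAnnihilator (x • T) ⊆ leftAnnihilator T) : T ⊆ {0} := by
  obtain ⟨n, hn⟩ := hx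
  have hpow : ∀ k ≤ n, x ^ k ∈ leftAnnihilator T := by
    intro k hk
    induction hk using Nat.decreasingInduction with
    | self => intro t _; rw [hn, zero_mul]
    | of_succ k _ ih =>
      apply h
      rintro _ ⟨t, ht, rfl⟩
      simp only [smul_eq_mul, ← mul_assoc, ← pow_succ]
      exact ih t ht
  intro t ht
  simpa using hpow 0 n.zero_le t ht

section NilSubsemigroup

variable {A : Set M} (hL : HasACCLeftAnnihilators M) (hAA : A * A ⊆ A)
  (hnil : ∀ a ∈ A, IsNilpotent a) (hpeel : rightAnnihilator (A * A * A) ⊆ rightAnnihilator A)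
include hL hAA hnil hpeel

theorem exists_mem_not_subset_leftAnnihilator_smul {W : Set M}
    (hW : ¬A ⊆ leftAnnihilator W) :
    ∃ τ ∈ A, ¬A ⊆ leftAnnihilator (τ • (A * W)) ∧
      ∀ z ∈ A, A ⊆ leftAnnihilator ((τ * z * τ) • (A * W)) := by
  obtain ⟨τ₀, hτ₀A, hτ₀⟩ : ∃ τ ∈ A, ¬A ⊆ leftAnnihilator (τ • (A * W)) := by
    by_contra! h
    refine hW fun a ha w hw => hpeel ?_ a ha
    rintro _ ⟨_, ⟨a', ha', τ, hτ, rfl⟩, b, hb, rfl⟩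
    simpa [mul_assoc] using h τ hτ ha' _ (Set.smul_mem_smul_set (Set.mul_mem_mul hb hw))
  let ι := {τ : A // ¬A ⊆ leftAnnihilator ((τ : M) • (A * W))}
  have : Nonempty ι := ⟨⟨⟨τ₀, hτ₀A⟩, hτ₀⟩⟩
  obtain ⟨⟨⟨τ, hτA⟩, hτ⟩, hmax⟩ := hL.exists_maximal fun i : ι => (i.1 : M) • (A * W)
  refine ⟨τ, hτA, hτ, fun z hz => by_contra fun hz' => hτ ?_⟩
  have hsub : (τ * z * τ) • (A * W) ⊆ τ • (A * W) := by
    rintro _ ⟨_, ⟨b, hb, w, hw, rfl⟩, rfl⟩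
    refine ⟨z * τ * b * w, ⟨z * τ * b, ?_, w, hw, rfl⟩, by simp [mul_assoc]⟩
    exact hAA (Set.mul_mem_mul (hAA (Set.mul_mem_mul hz hτA)) hb)
  have hτz : τ * z ∈ A := hAA (Set.mul_mem_mul hτA hz)
  have heq := hmax ⟨⟨τ * z * τ, hAA (Set.mul_mem_mul hτz hτA)⟩, hz'⟩
    (leftAnnihilator_antitone hsub)
  have hzero := subset_zero_of_leftAnnihilator_smul_subset (hnil _ hτz) (T := τ • (A * W))
    (by rw [smul_smul]; exact heq.le)
  intro a _ t ht
  rw [hzero ht, mul_zero]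

theorem exists_leftAnnihilator_mul_ssubset {W : Set M} (hW : ¬A ⊆ leftAnnihilator W) :
    ∃ W', ¬A ⊆ leftAnnihilator W' ∧ leftAnnihilator (A * W) ⊂ leftAnnihilator (A * W') := by
  obtain ⟨τ, hτA, hτ, hkill⟩ := exists_mem_not_subset_leftAnnihilator_smul hL hAA hnil hpeel hW
  refine ⟨τ • (A * W), hτ, leftAnnihilator_antitone ?_, fun hle => ?_⟩
  · rintro _ ⟨a, ha, _, ⟨_, ⟨b, hb, w, hw, rfl⟩, rfl⟩, rfl⟩
    exact ⟨a * τ * b, hAA (Set.mul_mem_mul (hAA (Set.mul_mem_mul ha hτA)) hb), w, hw,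
      by simp [mul_assoc]⟩
  · obtain ⟨a, ha, hne⟩ := Set.not_subset.1 hτ
    obtain ⟨_, ⟨_, ⟨b, hb, w, hw, rfl⟩, rfl⟩, hat⟩ :
        ∃ t ∈ τ • (A * W), a * t ≠ 0 := by simpa [leftAnnihilator] using hne
    have hkills : a * τ ∈ leftAnnihilator (A * (τ • (A * W))) := by
      rintro _ ⟨z, hz, _, ⟨_, ⟨b', hb', w', hw', rfl⟩, rfl⟩, rfl⟩
      simpa [mul_assoc] using hkill z hz ha _ (Set.smul_mem_smul_set (Set.mul_mem_mul hb' hw'))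
    exact hat (by simpa [mul_assoc] using hle hkills (b * w) (Set.mul_mem_mul hb hw))

theorem subset_leftAnnihilator_self : A ⊆ leftAnnihilator A := by
  by_contra hA
  have : Nonempty {W : Set M // ¬A ⊆ leftAnnihilator W} := ⟨⟨A, hA⟩⟩
  obtain ⟨⟨W, hW⟩, hmax⟩ :=
    hL.exists_maximal fun W : {W : Set M // ¬A ⊆ leftAnnihilator W} => A * W.1
  obtain ⟨W', hW', hlt⟩ := exists_leftAnnihilator_mul_ssubset hL hAA hnil hpeel hW
  exact hlt.ne (hmax ⟨W', hW'⟩ hlt.subset).symm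

end NilSubsemigroup

theorem exists_pow_subset_zero (hL : HasACCLeftAnnihilators M) (hR : HasACCRightAnnihilators M)
    {N : Set M} (hN : N * N ⊆ N) (hnil : ∀ x ∈ N, IsNilpotent x) :
    ∃ n, 0 < n ∧ N ^ n ⊆ {0} := by
  obtain ⟨k, hk⟩ := hR (fun k => rightAnnihilator (N ^ (k + 1))) (fun k => ⟨_, rfl⟩)
    (monotone_nat_of_le_succ fun k =>
      rightAnnihilator_antitone (pow_succ_subset_pow_succ_of_mul_subset hN k.le_succ))
  have hAA : N ^ (k + 1) * N ^ (k + 1) ⊆ N ^ (k + 1) := by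
    rw [← pow_add, show k + 1 + (k + 1) = 2 * k + 1 + 1 by omega]
    exact pow_succ_subset_pow_succ_of_mul_subset hN (by omega)
  have hpeel : rightAnnihilator (N ^ (k + 1) * N ^ (k + 1) * N ^ (k + 1)) ⊆
      rightAnnihilator (N ^ (k + 1)) := by
    rw [← pow_add, ← pow_add, show k + 1 + (k + 1) + (k + 1) = 3 * k + 2 + 1 by omega]
    exact (hk _ (by omega)).le
  have hA := subset_leftAnnihilator_self hL hAA
    (fun x hx => hnil x (by simpa using pow_succ_subset_pow_succ_of_mul_subset hN k.zero_le hx))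
    hpeel
  refine ⟨2 * (k + 1), by omega, ?_⟩
  rintro _ hx
  rw [two_mul, pow_add] at hx
  obtain ⟨a, ha, b, hb, rfl⟩ := hx
  exact hA ha b hb

end MonoidWithZero

end HersteinSmall

open HersteinSmall in
/-- If `Q` satisfies the ACC on right annihilators and on left annihilators,
then every nil right ideal of a subring `R` of `Q` is nilpotent. -/
theorem nil_right_ideal_nilpotent_of_acc_annihilators {Q : Type*} [Ring Q]
    (hR : ∀ c : ℕ → Set Q, (∀ n, ∃ S : Set Q, c n = {x : Q | ∀ s ∈ S, s * x = 0}) →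
      Monotone c → ∃ n, ∀ m, n ≤ m → c m = c n)
    (hL : ∀ c : ℕ → Set Q, (∀ n, ∃ S : Set Q, c n = {x : Q | ∀ s ∈ S, x * s = 0}) →
      Monotone c → ∃ n, ∀ m, n ≤ m → c m = c n)
    (R : Subring Q) (I : Submodule (↥R)ᵐᵒᵖ ↥R) (hI : ∀ x ∈ I, IsNilpotent x) :
    ∃ n : ℕ, 0 < n ∧ ∀ f : Fin n → ↥R, (∀ i, f i ∈ I) → (List.ofFn f).prod = 0 := by
  set N : Set Q := (↑) '' (I : Set R)
  have hNN : N * N ⊆ N := by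
    rintro _ ⟨_, ⟨a, ha, rfl⟩, _, ⟨b, hb, rfl⟩, rfl⟩
    exact ⟨a * b, I.smul_mem (MulOpposite.op b) ha, rfl⟩
  have hNnil : ∀ x ∈ N, IsNilpotent x := by
    rintro _ ⟨a, ha, rfl⟩
    exact (hI a ha).map R.subtype
  obtain ⟨n, hn, hNn⟩ := exists_pow_subset_zero hL hR hNN hNnil
  refine ⟨n, hn, fun f hf => ZeroMemClass.coe_eq_zero.mp (hNn ?_)⟩
  rw [SubmonoidClass.coe_list_prod, List.map_ofFn]
  exact Set.mem_pow.2 ⟨fun i => ⟨f i, f i, hf i, rfl⟩, rfl⟩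
end

section
/- Let F be a field and A an F-algebra which is prime and satisfies (NK). Then there exists a maximal ideal M of some von Neumann regular extension R' of A with M ∩ A = 0, such that A embeds into the prime von Neumann regular ring R'/M and every nonzero ideal of R'/M meets the image of A nontrivially. -/
/-- A ring is von Neumann regular if for every `x` there is `y` with `x = x*y*x`. -/
def IsVNRRing (R : Type*) [Ring R] : Prop :=
  ∀ x : R, ∃ y : R, x = x * y * x

/-- A ring is prime if the product of any two nonzero two-sided ideals is nonzero. -/
def IsPrimeRingIdeal (R : Type*) [Ring R] : Prop :=
  ∀ I J : TwoSidedIdeal R, I ≠ ⊥ → J ≠ ⊥ → ∃ a ∈ I, ∃ b ∈ J, a * b ≠ 0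

/-- `R'` is a von Neumann regular `F`-algebra extension of `A` carrying an ideal
`M`, maximal with respect to `M ∩ A = 0`, such that the quotient `R'/M` is prime
(phrased via the correspondence: ideals of `R'/M` are ideals of `R'` properly
containing `M`) and every nonzero ideal of `R'/M` meets the image of `A`
nontrivially. -/
def GoodVNRExtension (F : Type) [Field F] (A : Type) [Ring A] [Algebra F A]
    (R' : Type) [Ring R'] [Algebra F R'] : Prop :=
  IsVNRRing R' ∧ ∃ (ι : A →ₐ[F] R') (M : TwoSidedIdeal R'),
    Function.Injective ι ∧
    -- `M ∩ A = 0`, so `A` embeds into `R'/M`: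
    (∀ a : A, ι a ∈ M → a = 0) ∧
    -- `M` is maximal with respect to `M ∩ A = 0`:
    (∀ N : TwoSidedIdeal R', M ≤ N → (∀ a : A, ι a ∈ N → a = 0) → N = M) ∧
    -- the quotient `R'/M` is a prime ring:
    (∀ I J : TwoSidedIdeal R', M < I → M < J → ∃ x ∈ I, ∃ y ∈ J, x * y ∉ M) ∧
    -- every nonzero ideal of `R'/M` meets the image of `A` nontrivially:
    (∀ J : TwoSidedIdeal R', M < J → ∃ a : A, ι a ∈ J ∧ ι a ∉ M)

/-!
Take `R' = End_F(A)`, which is von Neumann regular, with `A` embedded by left multiplication,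
and let `M` be an ideal maximal with `M ∩ A = 0` (Zorn). By maximality, every ideal `J ⊋ M`
contains some `a ∈ A` outside `M`, so `J ∩ A` is a nonzero ideal of `A`. Given `I, J ⊋ M`,
primeness of `A` yields `x ∈ I ∩ A`, `y ∈ J ∩ A` with `xy ≠ 0`, and then `xy ∉ M`.
-/

theorem Module.End.isVNRRing (K V : Type*) [DivisionRing K] [AddCommGroup V] [Module K V] :
    IsVNRRing (Module.End K V) := by
  intro f
  obtain ⟨q, hq⟩ := (LinearMap.range f).exists_isCompl
  obtain ⟨g, hg⟩ := f.rangeRestrict.exists_rightInverse_of_surjective f.range_rangeRestrict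
  refine ⟨g ∘ₗ (LinearMap.range f).projectionOnto q hq, LinearMap.ext fun v => ?_⟩
  have hproj : (LinearMap.range f).projectionOnto q hq (f v) = f.rangeRestrict v :=
    Submodule.projectionOnto_apply_left hq (f.rangeRestrict v)
  have hsection : f (g (f.rangeRestrict v)) = f v :=
    congrArg Subtype.val (LinearMap.congr_fun hg (f.rangeRestrict v))
  simp only [Module.End.mul_apply, LinearMap.comp_apply, hproj, hsection]

namespace TwoSidedIdeal

variable {R : Type*} [Ring R]

theorem mem_sSup_of_isChain {c : Set (TwoSidedIdeal R)} (hc : IsChain (· ≤ ·) c)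
    (hne : c.Nonempty) {x : R} : x ∈ sSup c ↔ ∃ N ∈ c, x ∈ N := by
  refine ⟨fun hx => ?_, fun ⟨N, hN, hx⟩ => le_sSup hN hx⟩
  have common {a b : R} (ha : ∃ N ∈ c, a ∈ N) (hb : ∃ N ∈ c, b ∈ N) :
      ∃ N ∈ c, a ∈ N ∧ b ∈ N := by
    obtain ⟨N₁, hN₁, ha⟩ := ha
    obtain ⟨N₂, hN₂, hb⟩ := hb
    obtain ⟨N, hN, h₁, h₂⟩ := hc.directedOn N₁ hN₁ N₂ hN₂
    exact ⟨N, hN, h₁ ha, h₂ hb⟩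
  let U : TwoSidedIdeal R := .mk' {a | ∃ N ∈ c, a ∈ N}
    (hne.elim fun N hN => ⟨N, hN, N.zero_mem⟩)
    (fun ha hb => (common ha hb).elim fun N ⟨hN, ha, hb⟩ => ⟨N, hN, N.add_mem ha hb⟩)
    (fun ⟨N, hN, ha⟩ => ⟨N, hN, N.neg_mem ha⟩)
    (fun ⟨N, hN, hb⟩ => ⟨N, hN, N.mul_mem_left _ _ hb⟩)
    (fun ⟨N, hN, ha⟩ => ⟨N, hN, N.mul_mem_right _ _ ha⟩)
  have hU : sSup c ≤ U := sSup_le fun N hN _ hy => (mem_mk' ..).2 ⟨N, hN, hy⟩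
  exact (mem_mk' _ _ _ _ _ _ x).1 (hU hx)

variable {A : Type*} [Ring A] (f : A →+* R)

theorem comap_eq_bot_iff {N : TwoSidedIdeal R} :
    comap f N = ⊥ ↔ ∀ a, f a ∈ N → a = 0 := by
  simp only [eq_bot_iff, le_iff, Set.subset_def, SetLike.mem_coe, mem_comap, mem_bot]

theorem exists_maximal_comap_eq_bot (hf : Function.Injective f) :
    ∃ M : TwoSidedIdeal R, Maximal (fun N => comap f N = ⊥) M := by
  have hbot : comap f ⊥ = ⊥ :=
    (comap_eq_bot_iff f).2 fun a ha => hf (by rwa [map_zero, ← mem_bot])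
  have hchain : ∀ c ⊆ {N | comap f N = ⊥}, IsChain (· ≤ ·) c → ∀ N ∈ c,
      ∃ U ∈ {N | comap f N = ⊥}, ∀ N' ∈ c, N' ≤ U := by
    refine fun c hcs hc N hN =>
      ⟨sSup c, (comap_eq_bot_iff f).2 fun a ha => ?_, fun _ => le_sSup⟩
    obtain ⟨N', hN', ha⟩ := (mem_sSup_of_isChain hc ⟨N, hN⟩).1 ha
    exact (comap_eq_bot_iff f).1 (hcs hN') a ha
  obtain ⟨M, -, hM⟩ := zorn_le_nonempty₀ _ hchain ⊥ hbot
  exact ⟨M, hM⟩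

variable {f} {M : TwoSidedIdeal R} (hM : Maximal (fun N => comap f N = ⊥) M)
include hM

theorem exists_apply_mem_notMem_of_lt {J : TwoSidedIdeal R} (hJ : M < J) :
    ∃ a, f a ∈ J ∧ f a ∉ M := by
  by_contra! h
  refine hJ.not_ge (hM.2 ((comap_eq_bot_iff f).2 fun a ha => ?_) hJ.le)
  exact (comap_eq_bot_iff f).1 hM.1 a (h a ha)

theorem comap_ne_bot_of_lt {J : TwoSidedIdeal R} (hJ : M < J) : comap f J ≠ ⊥ := by
  obtain ⟨a, haJ, haM⟩ := exists_apply_mem_notMem_of_lt hM hJ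
  rw [Ne, comap_eq_bot_iff]
  exact fun h => haM (by rw [h a haJ, map_zero]; exact M.zero_mem)

theorem exists_mul_notMem_of_lt (hA : IsPrimeRingIdeal A) {I J : TwoSidedIdeal R}
    (hI : M < I) (hJ : M < J) : ∃ x ∈ I, ∃ y ∈ J, x * y ∉ M := by
  obtain ⟨x, hx, y, hy, hxy⟩ := hA _ _ (comap_ne_bot_of_lt hM hI) (comap_ne_bot_of_lt hM hJ)
  refine ⟨f x, (mem_comap _).1 hx, f y, (mem_comap _).1 hy, fun h => hxy ?_⟩
  exact (comap_eq_bot_iff f).1 hM.1 _ (by rwa [map_mul])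

end TwoSidedIdeal

theorem exists_good_VNR_extension_general (F : Type) [Field F] (A : Type) [Ring A]
    [Algebra F A] (hprime : IsPrimeRingIdeal A) :
    ∃ (R' : Type) (iR : Ring R') (jR : @Algebra F R' _ iR.toSemiring),
      @GoodVNRExtension F _ A _ _ R' iR jR := by
  let ι : A →ₐ[F] Module.End F A := Algebra.lmul F A
  have hι : Function.Injective ι := Algebra.lmul_injective
  obtain ⟨M, hM⟩ := TwoSidedIdeal.exists_maximal_comap_eq_bot (ι : A →+* Module.End F A) hι
  have hMA := (TwoSidedIdeal.comap_eq_bot_iff _).1 hM.1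
  have hMmax (N) (hMN : M ≤ N) (hN : ∀ a, ι a ∈ N → a = 0) : N = M :=
    (hM.2 ((TwoSidedIdeal.comap_eq_bot_iff _).2 hN) hMN).antisymm hMN
  exact ⟨Module.End F A, inferInstance, inferInstance, Module.End.isVNRRing F A, ι, M, hι, hMA,
    hMmax, fun _ _ => TwoSidedIdeal.exists_mul_notMem_of_lt hM hprime,
    fun _ => TwoSidedIdeal.exists_apply_mem_notMem_of_lt hM⟩

/-- Every prime algebra over a field satisfying (NK) admits a von Neumann
regular extension `R'` with an ideal `M` maximal with respect to `M ∩ A = 0`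
such that `A` embeds into the prime von Neumann regular ring `R'/M` and every
nonzero ideal of `R'/M` meets the image of `A` nontrivially. -/
theorem exists_good_VNR_extension (F : Type) [Field F] (A : Type) [Ring A]
    [Algebra F A] (hprime : IsPrimeRingIdeal A) (hNK : SatisfiesNK A) :
    ∃ (R' : Type) (iR : Ring R') (jR : @Algebra F R' _ iR.toSemiring),
      @GoodVNRExtension F _ A _ _ R' iR jR :=
  exists_good_VNR_extension_general F A hprime
end

section
/- Let Q be a ring, e ∈ Q an idempotent, F a subfield of the center of Q, and ξ, υ ∈ eQ elements such that ξ and υ are principally nilpotent in the F-subalgebra B̃ of Q generated by ξ and υ. Let B be the F-subalgebra of eQe generated by ξe and υe. Then ξe and υe are principally nilpotent elements of B. -/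
/-!
The elements `c` with `e * c * e = c * e` form a subring of `Q` containing `F`, `ξ` and `υ`, hence
all of `B̃`. On it `c ↦ c * e` is multiplicative, so every element of `B` is `c * e` with `c ∈ B̃`,
and then `ξ * e * (c * e) = (ξ * c) * e`. Finally `(a * e) ^ (k + 1) = a ^ (k + 1) * e` for such
`a`, so `a * e` is nilpotent whenever `a` is.
-/

namespace IsIdempotentElem

variable {R : Type*} [Ring R] {e : R}

/-- The idealizer `{c | c * (e * R) ⊆ e * R}` of the right ideal `e * R`. -/
def idealizer (he : IsIdempotentElem e) : Subring R where
  carrier := {c | e * c * e = c * e}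
  one_mem' := by simp [he.eq]
  zero_mem' := by simp
  add_mem' {c d} hc hd := by simp only [Set.mem_ofPred_eq, mul_add, add_mul] at *; rw [hc, hd]
  neg_mem' {c} hc := by simp only [Set.mem_ofPred_eq, mul_neg, neg_mul] at *; rw [hc]
  mul_mem' {c d} hc hd := by
    simp only [Set.mem_ofPred_eq] at *
    calc e * (c * d) * e = e * c * (e * d * e) := by rw [hd]; noncomm_ring
      _ = e * c * e * (d * e) := by noncomm_ring
      _ = c * (e * d * e) := by rw [hc]; noncomm_ring
      _ = c * d * e := by rw [hd]; noncomm_ring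

variable (he : IsIdempotentElem e)

theorem mem_idealizer {c : R} : c ∈ he.idealizer ↔ e * c * e = c * e := Iff.rfl

theorem mem_idealizer_of_mem_center {f : R} (hf : f ∈ Subring.center R) : f ∈ he.idealizer := by
  rw [mem_idealizer, Subring.mem_center_iff.mp hf e, mul_assoc, he.eq]

theorem mem_idealizer_of_mul_left_eq {a : R} (ha : e * a = a) : a ∈ he.idealizer := by
  rw [mem_idealizer, ha]

theorem mul_right_mul_mul_right {c d : R} (hd : d ∈ he.idealizer) :
    c * e * (d * e) = c * d * e := by
  rw [mul_assoc c, ← mul_assoc e, he.mem_idealizer.mp hd, mul_assoc]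

theorem mul_right_pow_succ {a : R} (ha : a ∈ he.idealizer) (n : ℕ) :
    (a * e) ^ (n + 1) = a ^ (n + 1) * e := by
  induction n with
  | zero => simp
  | succ n ih => rw [pow_succ, ih, he.mul_right_mul_mul_right ha, ← pow_succ]

theorem isNilpotent_mul_right {a : R} (ha : a ∈ he.idealizer) (hnil : IsNilpotent a) :
    IsNilpotent (a * e) := by
  obtain ⟨k, hk⟩ := hnil
  exact ⟨k + 1, by rw [he.mul_right_pow_succ ha, pow_succ, hk, zero_mul, zero_mul]⟩

def mulRightHom {S : Subring R} (hS : S ≤ he.idealizer) : S →ₙ+* R where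
  toFun c := c * e
  map_mul' _ d := (he.mul_right_mul_mul_right (hS d.2)).symm
  map_zero' := zero_mul e
  map_add' _ _ := add_mul _ _ e

end IsIdempotentElem

theorem corner_principally_nilpotent_general {Q : Type*} [Ring Q] (e : Q)
    (he : IsIdempotentElem e) (F : Subring Q) (hFcent : F ≤ Subring.center Q)
    (ξ υ : Q) (hξ : e * ξ = ξ) (hυ : e * υ = υ)
    -- `ξ` and `υ` are principally nilpotent in `B̃`, the `F`-subalgebra of `Q`
    -- generated by `ξ` and `υ`:
    (hξnil : ∀ b ∈ Subring.closure ((F : Set Q) ∪ {ξ, υ}), IsNilpotent (ξ * b))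
    (hυnil : ∀ b ∈ Subring.closure ((F : Set Q) ∪ {ξ, υ}), IsNilpotent (υ * b)) :
    -- `B` is the `F`-subalgebra of `eQe` generated by `ξe` and `υe`
    -- (a non-unital subring of `Q` containing the unit `e` of `eQe` and the
    -- scalars `F·e`):
    ∀ b ∈ NonUnitalSubring.closure
        ({ξ * e, υ * e, e} ∪ {x : Q | ∃ f ∈ F, x = f * e}),
      IsNilpotent (ξ * e * b) ∧ IsNilpotent (υ * e * b) := by
  set B' := Subring.closure ((F : Set Q) ∪ {ξ, υ})
  have hξB' : ξ ∈ B' := Subring.subset_closure (by simp)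
  have hυB' : υ ∈ B' := Subring.subset_closure (by simp)
  have hB'_idealizer : B' ≤ he.idealizer := by
    refine Subring.closure_le.mpr (Set.union_subset
      (fun f hf ↦ he.mem_idealizer_of_mem_center (hFcent hf)) ?_)
    rintro a (rfl | rfl)
    exacts [he.mem_idealizer_of_mul_left_eq hξ, he.mem_idealizer_of_mul_left_eq hυ]
  have hB_range : NonUnitalSubring.closure ({ξ * e, υ * e, e} ∪ {x : Q | ∃ f ∈ F, x = f * e}) ≤
      (he.mulRightHom hB'_idealizer).range := by
    refine NonUnitalSubring.closure_le.mpr (Set.union_subset ?_ ?_)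
    · rintro a (rfl | rfl | rfl)
      exacts [⟨⟨ξ, hξB'⟩, rfl⟩, ⟨⟨υ, hυB'⟩, rfl⟩, ⟨1, one_mul _⟩]
    · rintro _ ⟨f, hf, rfl⟩
      exact ⟨⟨f, Subring.subset_closure (Or.inl hf)⟩, rfl⟩
  have hnil : ∀ z ∈ B', ∀ c ∈ B', IsNilpotent (z * c) → IsNilpotent (z * e * (c * e)) := by
    intro z hz c hc h
    rw [he.mul_right_mul_mul_right (hB'_idealizer hc)]
    exact he.isNilpotent_mul_right (hB'_idealizer (mul_mem hz hc)) h
  intro b hb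
  obtain ⟨⟨c, hc⟩, rfl⟩ := hB_range hb
  exact ⟨hnil ξ hξB' c hc (hξnil c hc), hnil υ hυB' c hc (hυnil c hc)⟩

/-- Let `Q` be a ring, `e` an idempotent, `F` a subfield of the center of `Q`,
and `ξ, υ ∈ eQ` principally nilpotent in the `F`-subalgebra `B̃` of `Q`
generated by `ξ` and `υ`.  Then `ξe` and `υe` are principally nilpotent
elements of the `F`-subalgebra `B` of the corner ring `eQe` generated by `ξe`
and `υe` (with unit `e`): every element of `(ξe)B` and of `(υe)B` is
nilpotent. -/
theorem corner_principally_nilpotent {Q : Type*} [Ring Q] (e : Q)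
    (he : IsIdempotentElem e) (F : Subring Q) (hFcent : F ≤ Subring.center Q)
    (hFfield : IsField F) (ξ υ : Q) (hξ : e * ξ = ξ) (hυ : e * υ = υ)
    -- `ξ` and `υ` are principally nilpotent in `B̃`, the `F`-subalgebra of `Q`
    -- generated by `ξ` and `υ`:
    (hξnil : ∀ b ∈ Subring.closure ((F : Set Q) ∪ {ξ, υ}), IsNilpotent (ξ * b))
    (hυnil : ∀ b ∈ Subring.closure ((F : Set Q) ∪ {ξ, υ}), IsNilpotent (υ * b)) :
    -- `B` is the `F`-subalgebra of `eQe` generated by `ξe` and `υe`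
    -- (a non-unital subring of `Q` containing the unit `e` of `eQe` and the
    -- scalars `F·e`):
    ∀ b ∈ NonUnitalSubring.closure
        ({ξ * e, υ * e, e} ∪ {x : Q | ∃ f ∈ F, x = f * e}),
      IsNilpotent (ξ * e * b) ∧ IsNilpotent (υ * e * b) :=
  corner_principally_nilpotent_general e he F hFcent ξ υ hξ hυ hξnil hυnil
end

section
/- Let R be a ring satisfying (NK) witnessed by principally nilpotent elements x, y with x + y not nilpotent and x + y minimal non-nilpotent, and let I be a nonzero two-sided ideal of R. Set ξ = (x+y)^n x and υ = (x+y)^n y where n is such that (x+y)^n ∈ I. Then ξ, υ ∈ I, ξ and υ are principally nilpotent, and ξ + υ = (x+y)^{n+1} is not nilpotent; in particular ξ + υ ∈ I witnesses (NK) inside I. -/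
/-- An element `a` of a ring is *minimal non-nilpotent* if `a` is not nilpotent
but some power of `a` lies in every nonzero two-sided ideal. -/
def MinimalNonNilpotent {R : Type*} [Ring R] (a : R) : Prop :=
  ¬ IsNilpotent a ∧ ∀ J : TwoSidedIdeal R, J ≠ ⊥ → ∃ n : ℕ, a ^ n ∈ J

theorem IsNilpotent.mul_swap {M : Type*} [MonoidWithZero M] {a b : M}
    (h : IsNilpotent (a * b)) : IsNilpotent (b * a) := by
  obtain ⟨k, hk⟩ := h
  refine ⟨k + 1, ?_⟩
  calc (b * a) ^ (k + 1) = b * ((a * b) ^ k * a) := by rw [mul_pow_mul, pow_succ', mul_assoc]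
    _ = 0 := by rw [hk, zero_mul, mul_zero]

theorem PrincipallyNilpotent.mul_left {R : Type*} [Ring R] {x : R}
    (hx : PrincipallyNilpotent x) (s : R) : PrincipallyNilpotent (s * x) := fun r => by
  rw [mul_assoc]
  exact IsNilpotent.mul_swap (by rw [mul_assoc]; exact hx (r * s))

theorem NK_witness_inside_ideal_general {R : Type*} [Ring R] (x y : R)
    (hx : PrincipallyNilpotent x) (hy : PrincipallyNilpotent y)
    (hxy : ¬ IsNilpotent (x + y))
    (I : TwoSidedIdeal R) (n : ℕ) (hn : (x + y) ^ n ∈ I) :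
    (x + y) ^ n * x ∈ I ∧ (x + y) ^ n * y ∈ I ∧
      PrincipallyNilpotent ((x + y) ^ n * x) ∧
      PrincipallyNilpotent ((x + y) ^ n * y) ∧
      (x + y) ^ n * x + (x + y) ^ n * y = (x + y) ^ (n + 1) ∧
      ¬ IsNilpotent ((x + y) ^ n * x + (x + y) ^ n * y) ∧
      (x + y) ^ n * x + (x + y) ^ n * y ∈ I := by
  have hsum : (x + y) ^ n * x + (x + y) ^ n * y = (x + y) ^ (n + 1) := by
    rw [pow_succ, mul_add]
  refine ⟨I.mul_mem_right _ _ hn, I.mul_mem_right _ _ hn, hx.mul_left _, hy.mul_left _, hsum,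
    ?_, ?_⟩
  · rw [hsum]
    exact fun h => hxy h.of_pow
  · rw [hsum, pow_succ]
    exact I.mul_mem_right _ _ hn

/-- If `x`, `y` are principally nilpotent with `x + y` minimal non-nilpotent and
`(x+y)^n ∈ I` for a nonzero two-sided ideal `I`, then `ξ = (x+y)^n x` and
`υ = (x+y)^n y` lie in `I`, are principally nilpotent, and their sum
`(x+y)^{n+1}` is not nilpotent and lies in `I`; so they witness (NK) inside `I`. -/
theorem NK_witness_inside_ideal {R : Type*} [Ring R] (x y : R)
    (hx : PrincipallyNilpotent x) (hy : PrincipallyNilpotent y)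
    (hxy : ¬ IsNilpotent (x + y)) (hmin : MinimalNonNilpotent (x + y))
    (I : TwoSidedIdeal R) (hI : I ≠ ⊥) (n : ℕ) (hn : (x + y) ^ n ∈ I) :
    (x + y) ^ n * x ∈ I ∧ (x + y) ^ n * y ∈ I ∧
      PrincipallyNilpotent ((x + y) ^ n * x) ∧
      PrincipallyNilpotent ((x + y) ^ n * y) ∧
      (x + y) ^ n * x + (x + y) ^ n * y = (x + y) ^ (n + 1) ∧
      ¬ IsNilpotent ((x + y) ^ n * x + (x + y) ^ n * y) ∧
      (x + y) ^ n * x + (x + y) ^ n * y ∈ I :=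
  NK_witness_inside_ideal_general x y hx hy hxy I n hn
end
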